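/- arXiv:2301.01973 — 3 statements merged into one kernel-verified Lean document; each statement's English description precedes it below -/
import Mathlib

section
/- (Brezzi) Let X be a reflexive Banach space and Q a Banach space. Suppose D ∈ B(X, X*) is weakly coercive over the kernel of E, and E ∈ B(X, Q) is inf-sup stable. Then for every ḡ ∈ X* and f ∈ Q the saddle-point system D x + E* p = ḡ, E x = f has a unique solution (x,p) ∈ X × Q*, and there exists C > 0 independent of the data with ‖x‖_X + ‖p‖_{Q*} ≤ C(‖ḡ‖_{X*} + ‖f‖_Q). -/
/-!
Inf-sup stability of `E` says that `E*` is bounded below. By Hahn–Banach, every `y ∈ Q` then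
lies in the closure of the image under `E` of the ball of radius `‖y‖ / β`, and the iteration
from the proof of the open mapping theorem turns these approximate preimages into exact ones of
norm at most `2 ‖y‖ / β`.

On the closed, hence reflexive, subspace `ker E`, the form `D` induces `T : ker E → (ker E)*`.
The first inf-sup condition makes `T` bounded below, so its range is closed; the second one makes
its transpose injective, so by reflexivity its range is dense. Thus `T` is onto, which lets us
correct a preimage `x₀` of `f` by an element of `ker E` so that the first equation holds on
`ker E`; the remaining functional `g - D x` vanishes on `ker E` and therefore factors as `p ∘ E`.
The two inf-sup conditions bound `x` and `p` by the data, and applying this bound to the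
difference of two solutions gives uniqueness.
-/

open Filter Metric NormedSpace Topology

section HahnBanach

variable {X : Type*} [NormedAddCommGroup X] [NormedSpace ℝ X]

theorem Submodule.exists_dual_eq_zero_of_notMem (W : Submodule ℝ X) (hW : IsClosed (W : Set X))
    {x : X} (hx : x ∉ W) : ∃ φ : StrongDual ℝ X, (∀ w ∈ W, φ w = 0) ∧ φ x ≠ 0 := by
  obtain ⟨φ, u, hφW, hφx⟩ := geometric_hahn_banach_closed_point W.convex hW hx
  have hu : 0 < u := by simpa using hφW 0 W.zero_mem
  refine ⟨φ, fun w hw => ?_, by linarith⟩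
  by_contra hw0
  -- `φ` is bounded above on the line through `w`, so it must vanish there
  have := hφW ((u / φ w) • w) (W.smul_mem _ hw)
  rw [map_smul, smul_eq_mul, div_mul_cancel₀ _ hw0] at this
  exact lt_irrefl u this

theorem Submodule.topologicalClosure_eq_top_of_forall_dual
    (W : Submodule ℝ X) (hW : ∀ φ : StrongDual ℝ X, (∀ w ∈ W, φ w = 0) → φ = 0) :
    W.topologicalClosure = ⊤ := by
  refine eq_top_iff'.2 fun x => by_contra fun hx => ?_
  obtain ⟨φ, hφW, hφx⟩ :=
    W.topologicalClosure.exists_dual_eq_zero_of_notMem W.isClosed_topologicalClosure hx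
  exact hφx (by rw [hW φ fun w hw => hφW w (W.le_topologicalClosure hw)]; rfl)

theorem Submodule.surjective_inclusionInDoubleDual
    (hX : Function.Surjective (inclusionInDoubleDual ℝ X))
    (V : Submodule ℝ X) (hV : IsClosed (V : Set X)) :
    Function.Surjective (inclusionInDoubleDual ℝ V) := by
  intro Φ
  obtain ⟨x, hx⟩ := hX (Φ.comp (ContinuousLinearMap.precomp ℝ V.subtypeL))
  have hΦ : ∀ ψ : StrongDual ℝ X, ψ x = Φ (ψ.comp V.subtypeL) := fun ψ =>
    DFunLike.congr_fun hx ψ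
  have hxV : x ∈ V := by
    by_contra hxV
    obtain ⟨ψ, hψV, hψx⟩ := V.exists_dual_eq_zero_of_notMem hV hxV
    have hψ : ψ.comp V.subtypeL = 0 := by ext v; exact hψV v v.2
    exact hψx (by rw [hΦ, hψ, map_zero])
  refine ⟨⟨x, hxV⟩, ContinuousLinearMap.ext fun φ => ?_⟩
  obtain ⟨ψ, hψ, -⟩ := exists_extension_norm_eq V φ
  have hψφ : ψ.comp V.subtypeL = φ := ContinuousLinearMap.ext hψ
  rw [dual_def, ← hψ, ← hψφ]
  exact hΦ ψ

end HahnBanach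

theorem ContinuousLinearMap.surjective_of_norm_le_of_injective_flip
    {V : Type*} [NormedAddCommGroup V] [NormedSpace ℝ V] [CompleteSpace V]
    (hV : Function.Surjective (inclusionInDoubleDual ℝ V))
    (T : V →L[ℝ] StrongDual ℝ V) {γ : ℝ} (hγ : 0 < γ) (hT : ∀ v, γ * ‖v‖ ≤ ‖T v‖)
    (hT' : Function.Injective T.flip) : Function.Surjective T := by
  refine (T.bijective_iff_dense_range_and_antilipschitz.2
    ⟨?_, ⟨γ⁻¹, inv_nonneg.2 hγ.le⟩, ?_⟩).2
  · refine Submodule.topologicalClosure_eq_top_of_forall_dual _ fun Φ hΦ => ?_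
    obtain ⟨w, rfl⟩ := hV Φ
    have hw : T.flip w = 0 := ContinuousLinearMap.ext fun v => hΦ (T v) ⟨v, rfl⟩
    rw [(map_eq_zero_iff _ hT').1 hw, map_zero]
  · exact T.antilipschitz_of_bound fun v => (le_inv_mul_iff₀ hγ).2 (hT v)

theorem ContinuousLinearMap.exists_preimage_norm_le_of_approx
    {𝕜 X Q : Type*} [NontriviallyNormedField 𝕜]
    [NormedAddCommGroup X] [NormedSpace 𝕜 X] [CompleteSpace X]
    [NormedAddCommGroup Q] [NormedSpace 𝕜 Q]
    (f : X →L[𝕜] Q) {C : ℝ} (hC : 0 ≤ C)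
    (hf : ∀ y, ∃ x, ‖y - f x‖ ≤ ‖y‖ / 2 ∧ ‖x‖ ≤ C * ‖y‖) (y : Q) :
    ∃ x, f x = y ∧ ‖x‖ ≤ 2 * C * ‖y‖ := by
  choose a ha_res ha_norm using hf
  -- `r n` is what is left of `y` after `n` corrections, `u n` the `n`-th correction
  set r : ℕ → Q := fun n => (fun z => z - f (a z))^[n] y
  set u : ℕ → X := fun n => a (r n)
  have hr_succ (n : ℕ) : r (n + 1) = r n - f (u n) := Function.iterate_succ_apply' _ _ _
  have hr_le (n : ℕ) : ‖r n‖ ≤ (1 / 2) ^ n * ‖y‖ := by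
    induction n with
    | zero => simp [r]
    | succ n ih =>
      rw [hr_succ, pow_succ]
      linarith [ha_res (r n)]
  have hu_le (n : ℕ) : ‖u n‖ ≤ C * ‖y‖ * (1 / 2) ^ n := by
    calc ‖u n‖ ≤ C * ‖r n‖ := ha_norm _
      _ ≤ C * ((1 / 2) ^ n * ‖y‖) := by gcongr; exact hr_le n
      _ = C * ‖y‖ * (1 / 2) ^ n := by ring
  have hu_sum : Summable fun n => ‖u n‖ :=
    .of_nonneg_of_le (fun _ => norm_nonneg _) hu_le (summable_geometric_two.mul_left _)
  refine ⟨∑' n, u n, ?_, ?_⟩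
  · have hpartial (n : ℕ) : f (∑ i ∈ Finset.range n, u i) = y - r n := by
      rw [map_sum, show y = r 0 from rfl, ← Finset.sum_range_sub' r]
      exact Finset.sum_congr rfl fun i _ => by rw [hr_succ, sub_sub_cancel]
    have hr_lim : Tendsto r atTop (𝓝 0) :=
      squeeze_zero_norm hr_le (by
        simpa using (tendsto_pow_atTop_nhds_zero_of_lt_one (by norm_num : (0 : ℝ) ≤ 1 / 2)
          (by norm_num)).mul_const ‖y‖)
    refine tendsto_nhds_unique
      ((f.continuous.tendsto _).comp hu_sum.of_norm.hasSum.tendsto_sum_nat) ?_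
    simpa [Function.comp_def, hpartial] using tendsto_const_nhds.sub hr_lim
  · calc ‖∑' n, u n‖ ≤ ∑' n, ‖u n‖ := norm_tsum_le_tsum_norm hu_sum
      _ ≤ ∑' n : ℕ, C * ‖y‖ * (1 / 2) ^ n :=
        hu_sum.tsum_le_tsum hu_le (summable_geometric_two.mul_left _)
      _ = 2 * C * ‖y‖ := by rw [tsum_mul_left, tsum_geometric_two]; ring

section InfSup

variable {X Q : Type*} [NormedAddCommGroup X] [NormedSpace ℝ X]
  [NormedAddCommGroup Q] [NormedSpace ℝ Q] {E : X →L[ℝ] Q} {β : ℝ}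

theorem mem_closure_image_closedBall_of_infSup (hβ : 0 < β)
    (hE : ∀ q : StrongDual ℝ Q, β * ‖q‖ ≤ ‖q.comp E‖) (y : Q) :
    y ∈ closure (E '' closedBall 0 (β⁻¹ * ‖y‖)) := by
  rcases eq_or_ne y 0 with rfl | hy
  · exact subset_closure ⟨0, by simp, map_zero E⟩
  set r := β⁻¹ * ‖y‖
  have hr : 0 < r := by positivity
  by_contra hyS
  obtain ⟨φ, u, hφS, hφy⟩ := geometric_hahn_banach_closed_point
    ((convex_closedBall (0 : X) r).linear_image E.toLinearMap).closure isClosed_closure hyS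
  simp only [ContinuousLinearMap.coe_coe] at hφS
  have hφE : ‖φ.comp E‖ ≤ u / r := by
    refine ContinuousLinearMap.opNorm_bound_of_ball_bound hr u _ fun v hv => abs_le.2 ⟨?_, ?_⟩
    · have := hφS _ (subset_closure ⟨-v, by simpa using hv, rfl⟩)
      simp only [map_neg, ContinuousLinearMap.comp_apply] at this ⊢
      linarith
    · exact (hφS _ (subset_closure ⟨v, hv, rfl⟩)).le
  have : φ y ≤ u :=
    calc φ y ≤ ‖φ‖ * ‖y‖ := (Real.le_norm_self _).trans (φ.le_opNorm y)
      _ = β * ‖φ‖ * r := by simp only [r]; field_simp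
      _ ≤ ‖φ.comp E‖ * r := by gcongr; exact hE φ
      _ ≤ u := (le_div_iff₀ hr).1 hφE
  linarith

theorem exists_preimage_norm_le_of_infSup [CompleteSpace X] (hβ : 0 < β)
    (hE : ∀ q : StrongDual ℝ Q, β * ‖q‖ ≤ ‖q.comp E‖) (y : Q) :
    ∃ x, E x = y ∧ ‖x‖ ≤ 2 * β⁻¹ * ‖y‖ := by
  refine E.exists_preimage_norm_le_of_approx (inv_nonneg.2 hβ.le) (fun y => ?_) y
  rcases eq_or_ne y 0 with rfl | hy
  · exact ⟨0, by simp⟩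
  obtain ⟨_, ⟨x, hx, rfl⟩, hxy⟩ := Metric.mem_closure_iff.1
    (mem_closure_image_closedBall_of_infSup hβ hE y) (‖y‖ / 2) (by positivity)
  exact ⟨x, by simpa [dist_eq_norm] using hxy.le, by simpa using hx⟩

end InfSup

theorem ContinuousLinearMap.exists_comp_eq_of_ker_le
    {X Q : Type*} [NormedAddCommGroup X] [NormedSpace ℝ X]
    [NormedAddCommGroup Q] [NormedSpace ℝ Q]
    {E : X →L[ℝ] Q} {A : ℝ} (hE : ∀ y, ∃ x, E x = y ∧ ‖x‖ ≤ A * ‖y‖)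
    (h : StrongDual ℝ X) (hker : ∀ w, E w = 0 → h w = 0) :
    ∃ p : StrongDual ℝ Q, p.comp E = h := by
  choose s hs hs_norm using hE
  -- `h ∘ s` does not depend on the choice of the preimages, hence is linear
  have hhs (x : X) (y : Q) (hxy : E x = y) : h (s y) = h x := by
    have := hker (s y - x) (by rw [map_sub, hs, hxy, sub_self])
    rwa [map_sub, sub_eq_zero] at this
  let p : Q →ₗ[ℝ] ℝ :=
    { toFun := fun y => h (s y)
      map_add' := fun y₁ y₂ => by
        simp only [hhs (s y₁ + s y₂) _ (by rw [map_add, hs, hs]), map_add]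
      map_smul' := fun c y => by
        simp only [hhs (c • s y) _ (by rw [map_smul, hs]), map_smul, RingHom.id_apply] }
  refine ⟨p.mkContinuous (‖h‖ * A) fun y => ?_, ContinuousLinearMap.ext fun x => hhs x _ rfl⟩
  calc ‖h (s y)‖ ≤ ‖h‖ * ‖s y‖ := h.le_opNorm _
    _ ≤ ‖h‖ * (A * ‖y‖) := by gcongr; exact hs_norm y
    _ = ‖h‖ * A * ‖y‖ := by ring

section SaddlePoint

variable {X Q : Type*} [NormedAddCommGroup X] [NormedSpace ℝ X]
  [NormedAddCommGroup Q] [NormedSpace ℝ Q] {D : X →L[ℝ] X →L[ℝ] ℝ} {E : X →L[ℝ] Q}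
  {g g' : StrongDual ℝ X} {f f' : Q} {x x' : X} {p p' : StrongDual ℝ Q} {β γ : ℝ}

def IsSaddlePointSolution (D : X →L[ℝ] X →L[ℝ] ℝ) (E : X →L[ℝ] Q) (g : StrongDual ℝ X) (f : Q)
    (x : X) (p : StrongDual ℝ Q) : Prop :=
  (∀ w, D x w + p (E w) = g w) ∧ E x = f

theorem IsSaddlePointSolution.sub (h : IsSaddlePointSolution D E g f x p)
    (h' : IsSaddlePointSolution D E g' f' x' p') :
    IsSaddlePointSolution D E (g - g') (f - f') (x - x') (p - p') :=
  ⟨fun w => by simp only [map_sub, sub_apply, ← h.1 w, ← h'.1 w]; ring,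
    by rw [map_sub, h.2, h'.2]⟩

theorem IsSaddlePointSolution.comp_eq (h : IsSaddlePointSolution D E g f x p) :
    p.comp E = g - D x :=
  ContinuousLinearMap.ext fun w => by simp [← h.1 w]

theorem IsSaddlePointSolution.mul_norm_sub_le
    (hD : ∀ v : X, E v = 0 → γ * ‖v‖ ≤ ⨆ w : {w : X // E w = 0 ∧ ‖w‖ ≤ 1}, D v w.1)
    (h : IsSaddlePointSolution D E g f x p) {x₀ : X} (hx₀ : E x₀ = f) :
    γ * ‖x - x₀‖ ≤ ‖g‖ + ‖D‖ * ‖x₀‖ := by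
  have : Nonempty {w : X // E w = 0 ∧ ‖w‖ ≤ 1} := ⟨⟨0, by simp⟩⟩
  refine (hD _ (by rw [map_sub, h.2, hx₀, sub_self])).trans (ciSup_le fun ⟨w, hw, hw1⟩ => ?_)
  have hDw : D (x - x₀) w = (g - D x₀) w := by
    simp [← h.1 w, hw]
  calc D (x - x₀) w = (g - D x₀) w := hDw
    _ ≤ ‖g - D x₀‖ := (Real.le_norm_self _).trans ((g - D x₀).unit_le_opNorm w hw1)
    _ ≤ ‖g‖ + ‖D‖ * ‖x₀‖ := (norm_sub_le _ _).trans (by gcongr; exact D.le_opNorm x₀)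

theorem IsSaddlePointSolution.norm_le (hγ : 0 < γ)
    (hD : ∀ v : X, E v = 0 → γ * ‖v‖ ≤ ⨆ w : {w : X // E w = 0 ∧ ‖w‖ ≤ 1}, D v w.1)
    (h : IsSaddlePointSolution D E g f x p) {A : ℝ} (hA : 0 ≤ A)
    (hf : ∃ x₀, E x₀ = f ∧ ‖x₀‖ ≤ A * ‖f‖) :
    ‖x‖ ≤ (A + (1 + ‖D‖ * A) / γ) * (‖g‖ + ‖f‖) := by
  obtain ⟨x₀, hx₀, hx₀A⟩ := hf
  have hx₀N : ‖x₀‖ ≤ A * (‖g‖ + ‖f‖) :=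
    hx₀A.trans (by gcongr; exact le_add_of_nonneg_left (norm_nonneg g))
  calc ‖x‖ ≤ ‖x₀‖ + ‖x - x₀‖ := norm_le_insert' _ _
    _ ≤ A * (‖g‖ + ‖f‖) + ((‖g‖ + ‖f‖) + ‖D‖ * (A * (‖g‖ + ‖f‖))) / γ := by
      refine add_le_add hx₀N ((le_div_iff₀' hγ).2 ((h.mul_norm_sub_le hD hx₀).trans ?_))
      gcongr
      exact le_add_of_nonneg_right (norm_nonneg f)
    _ = (A + (1 + ‖D‖ * A) / γ) * (‖g‖ + ‖f‖) := by ring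

theorem IsSaddlePointSolution.mul_norm_multiplier_le
    (hE : ∀ q : StrongDual ℝ Q, β * ‖q‖ ≤ ‖q.comp E‖)
    (h : IsSaddlePointSolution D E g f x p) : β * ‖p‖ ≤ ‖g‖ + ‖D‖ * ‖x‖ :=
  calc β * ‖p‖ ≤ ‖p.comp E‖ := hE p
    _ = ‖g - D x‖ := by rw [h.comp_eq]
    _ ≤ ‖g‖ + ‖D‖ * ‖x‖ := (norm_sub_le _ _).trans (by gcongr; exact D.le_opNorm x)

theorem exists_isSaddlePointSolution [CompleteSpace X]
    (hX : Function.Surjective (inclusionInDoubleDual ℝ X)) (hγ : 0 < γ)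
    (hD₁ : ∀ v : X, E v = 0 → γ * ‖v‖ ≤ ⨆ w : {w : X // E w = 0 ∧ ‖w‖ ≤ 1}, D v w.1)
    (hD₂ : ∀ w : X, E w = 0 → γ * ‖w‖ ≤ ⨆ v : {v : X // E v = 0 ∧ ‖v‖ ≤ 1}, D v.1 w)
    {A : ℝ} (hE : ∀ y, ∃ x, E x = y ∧ ‖x‖ ≤ A * ‖y‖) (g : StrongDual ℝ X) (f : Q) :
    ∃ x p, IsSaddlePointSolution D E g f x p := by
  have : Nonempty {w : X // E w = 0 ∧ ‖w‖ ≤ 1} := ⟨⟨0, by simp⟩⟩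
  set K := E.ker
  have hK : IsClosed (K : Set X) := E.isClosed_ker
  have : CompleteSpace K := hK.completeSpace_coe
  set T := D.bilinearComp K.subtypeL K.subtypeL
  have hT : ∀ v, γ * ‖v‖ ≤ ‖T v‖ := fun v => (hD₁ v v.2).trans <|
    ciSup_le fun ⟨w, hw, hw1⟩ => (Real.le_norm_self _).trans ((T v).unit_le_opNorm ⟨w, hw⟩ hw1)
  have hT' : Function.Injective T.flip := (injective_iff_map_eq_zero _).2 fun w hw => by
    have hDw : ∀ v : {v : X // E v = 0 ∧ ‖v‖ ≤ 1}, D v.1 w ≤ 0 := fun ⟨v, hv, _⟩ =>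
      (DFunLike.congr_fun hw ⟨v, hv⟩).le
    have hγw : γ * ‖w‖ ≤ γ * 0 := by simpa using (hD₂ w w.2).trans (ciSup_le hDw)
    exact norm_le_zero_iff.1 (le_of_mul_le_mul_left hγw hγ)
  obtain ⟨x₀, hx₀, -⟩ := hE f
  obtain ⟨z, hz⟩ := T.surjective_of_norm_le_of_injective_flip
    (K.surjective_inclusionInDoubleDual hX hK) hγ hT hT' ((g - D x₀).comp K.subtypeL)
  -- on `ker E` the first equation holds for `x₀ + z`, so `g - D (x₀ + z)` factors through `E`
  obtain ⟨p, hp⟩ :=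
    ContinuousLinearMap.exists_comp_eq_of_ker_le hE (g - D (x₀ + z)) fun w hw => by
      have := DFunLike.congr_fun hz ⟨w, hw⟩
      simp only [T, ContinuousLinearMap.bilinearComp_apply, Submodule.subtypeL_apply,
        ContinuousLinearMap.comp_apply, sub_apply] at this
      simp only [map_add, sub_apply, add_apply, this]
      ring
  refine ⟨x₀ + z, p, fun w => ?_, by simp [hx₀]⟩
  rw [← ContinuousLinearMap.comp_apply, hp]
  simp

end SaddlePoint

theorem stmt_2_general {X Q : Type*}
    [NormedAddCommGroup X] [NormedSpace ℝ X] [CompleteSpace X]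
    [NormedAddCommGroup Q] [NormedSpace ℝ Q]
    -- reflexivity of X
    (hrefl : Function.Surjective (NormedSpace.inclusionInDoubleDual ℝ X))
    (D : X →L[ℝ] X →L[ℝ] ℝ) (E : X →L[ℝ] Q)
    -- E is inf-sup stable:  β‖q‖ ≤ sup_{v ≠ 0} ⟨q, E v⟩/‖v‖ = ‖q ∘ E‖
    (β : ℝ) (hβ : 0 < β)
    (hE : ∀ q : Q →L[ℝ] ℝ, β * ‖q‖ ≤ ‖q.comp E‖)
    -- D is weakly coercive over ker E: both inf-sup conditions for D restricted to ker E
    (γ : ℝ) (hγ : 0 < γ)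
    (hD1 : ∀ v : X, E v = 0 →
      γ * ‖v‖ ≤ ⨆ w : {w : X // E w = 0 ∧ ‖w‖ ≤ 1}, D v w.1)
    (hD2 : ∀ w : X, E w = 0 →
      γ * ‖w‖ ≤ ⨆ v : {v : X // E v = 0 ∧ ‖v‖ ≤ 1}, D v.1 w) :
    ∃ C > 0, ∀ (g : X →L[ℝ] ℝ) (f : Q),
      (∃! xp : X × (Q →L[ℝ] ℝ),
        (∀ w : X, D xp.1 w + xp.2 (E w) = g w) ∧ E xp.1 = f) ∧
      (∀ (x : X) (p : Q →L[ℝ] ℝ),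
        ((∀ w : X, D x w + p (E w) = g w) ∧ E x = f) →
          ‖x‖ + ‖p‖ ≤ C * (‖g‖ + ‖f‖)) := by
  have hs := exists_preimage_norm_le_of_infSup hβ hE
  set c := 2 * β⁻¹ + (1 + ‖D‖ * (2 * β⁻¹)) / γ
  have hbound (g : StrongDual ℝ X) (f : Q) (x : X) (p : StrongDual ℝ Q)
      (h : IsSaddlePointSolution D E g f x p) :
      ‖x‖ + ‖p‖ ≤ (c + (1 + ‖D‖ * c) / β) * (‖g‖ + ‖f‖) :=
    calc ‖x‖ + ‖p‖ ≤ c * (‖g‖ + ‖f‖) + (‖g‖ + ‖f‖ + ‖D‖ * (c * (‖g‖ + ‖f‖))) / β := by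
          have hx := h.norm_le hγ hD1 (by positivity) (hs f)
          refine add_le_add hx ((le_div_iff₀' hβ).2 (h.mul_norm_multiplier_le hE |>.trans ?_))
          gcongr
          exact le_add_of_nonneg_right (norm_nonneg f)
      _ = (c + (1 + ‖D‖ * c) / β) * (‖g‖ + ‖f‖) := by ring
  refine ⟨_, by positivity, fun g f => ⟨?_, hbound g f⟩⟩
  obtain ⟨x, p, hxp⟩ := exists_isSaddlePointSolution hrefl hγ hD1 hD2 hs g f
  refine ⟨(x, p), hxp, fun ⟨y, q⟩ hyq => ?_⟩
  have h0 : ‖y - x‖ + ‖q - p‖ ≤ 0 := by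
    simpa using hbound _ _ _ _ (IsSaddlePointSolution.sub hyq hxp)
  have hy : y - x = 0 := norm_le_zero_iff.1 (by linarith [norm_nonneg (q - p)])
  have hq : q - p = 0 := norm_le_zero_iff.1 (by linarith [norm_nonneg (y - x)])
  exact Prod.ext (sub_eq_zero.1 hy) (sub_eq_zero.1 hq)

/-- Brezzi's theorem: if `X` is a reflexive Banach space, `D ∈ B(X,X*)` is weakly coercive over
the kernel of `E` (both inf-sup conditions hold on `ker E`), and `E ∈ B(X,Q)` is inf-sup
stable, then for every `ḡ ∈ X*` and `f ∈ Q` the saddle-point system `D x + E* p = ḡ`,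
`E x = f` has a unique solution `(x,p) ∈ X × Q*` satisfying
`‖x‖ + ‖p‖ ≤ C (‖ḡ‖ + ‖f‖)` with `C` independent of the data. -/
theorem stmt_2 {X Q : Type*}
    [NormedAddCommGroup X] [NormedSpace ℝ X] [CompleteSpace X]
    [NormedAddCommGroup Q] [NormedSpace ℝ Q] [CompleteSpace Q]
    -- reflexivity of X
    (hrefl : Function.Surjective (NormedSpace.inclusionInDoubleDual ℝ X))
    (D : X →L[ℝ] X →L[ℝ] ℝ) (E : X →L[ℝ] Q)
    -- E is inf-sup stable:  β‖q‖ ≤ sup_{v ≠ 0} ⟨q, E v⟩/‖v‖ = ‖q ∘ E‖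
    (β : ℝ) (hβ : 0 < β)
    (hE : ∀ q : Q →L[ℝ] ℝ, β * ‖q‖ ≤ ‖q.comp E‖)
    -- D is weakly coercive over ker E: both inf-sup conditions for D restricted to ker E
    (γ : ℝ) (hγ : 0 < γ)
    (hD1 : ∀ v : X, E v = 0 →
      γ * ‖v‖ ≤ ⨆ w : {w : X // E w = 0 ∧ ‖w‖ ≤ 1}, D v w.1)
    (hD2 : ∀ w : X, E w = 0 →
      γ * ‖w‖ ≤ ⨆ v : {v : X // E v = 0 ∧ ‖v‖ ≤ 1}, D v.1 w) :
    ∃ C > 0, ∀ (g : X →L[ℝ] ℝ) (f : Q),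
      (∃! xp : X × (Q →L[ℝ] ℝ),
        (∀ w : X, D xp.1 w + xp.2 (E w) = g w) ∧ E xp.1 = f) ∧
      (∀ (x : X) (p : Q →L[ℝ] ℝ),
        ((∀ w : X, D x w + p (E w) = g w) ∧ E x = f) →
          ‖x‖ + ‖p‖ ≤ C * (‖g‖ + ‖f‖)) :=
  stmt_2_general hrefl D E β hβ hE γ hγ hD1 hD2
end

section
/- Under the assumptions that Y and U are reflexive Hilbert spaces, A(μ) ∈ B(Y, Q) is weakly coercive, B(μ) ∈ B(U, Q) is not the zero operator, αN(μ) is coercive on U with constant α > 0, and m(z,z;μ) ≥ 0 for all z ∈ Z, the operator E(μ) = (A(μ), B(μ)) : Y × U → Q is inf-sup stable and the operator D(μ) = diag(O*M(μ)O, αN(μ)) is coercive over the kernel of E(μ). Consequently, the linear-quadratic optimality system in saddle-point form has a unique solution. -/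
open InnerProductSpace Function

/-!
The inf-sup conditions make `a` an isomorphism `Y ≃ P'` and `a.flip` one `P ≃ Y'`: the Riesz
representative of `a` is bounded below, hence has closed range, and its orthogonal complement is
trivial. Testing with `(y, 0)` transfers the inf-sup condition of `a` to `E = (a, b)`. On `ker E`
we have `a y = -b u`, so `‖y‖ ≤ ‖b‖ / γ * ‖u‖` and the coercivity of `α n` alone controls
`‖(y, u)‖`. For the saddle-point system, `ker E` is the graph of `-a⁻¹ b`, on which the cost form
is coercive: Lax–Milgram there gives the control, and inverting `a.flip` gives the adjoint state.
Uniqueness follows from coercivity on `ker E` together with injectivity of `E'`.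
-/

section UnitClosedBall

variable {E : Type*} [SeminormedAddCommGroup E] [NormedSpace ℝ E]

theorem ContinuousLinearMap.bddAbove_range_unitClosedBall (f : E →L[ℝ] ℝ) :
    BddAbove (Set.range fun x : {x : E // ‖x‖ ≤ 1} => f x.1) := by
  refine ⟨‖f‖, ?_⟩
  rintro _ ⟨x, rfl⟩
  exact (Real.le_norm_self _).trans (f.unit_le_opNorm _ x.2)

theorem ContinuousLinearMap.iSup_unitClosedBall_le_opNorm (f : E →L[ℝ] ℝ) :
    ⨆ x : {x : E // ‖x‖ ≤ 1}, f x.1 ≤ ‖f‖ :=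
  Real.iSup_le (fun x => (Real.le_norm_self _).trans (f.unit_le_opNorm _ x.2)) (norm_nonneg f)

theorem ContinuousLinearMap.iSup_unitClosedBall_comp_le {X : Type*} [SeminormedAddCommGroup X]
    (f : E →L[ℝ] ℝ) {L : X → E} (hL : ∀ x, ‖L x‖ ≤ ‖x‖) :
    ⨆ x : {x : X // ‖x‖ ≤ 1}, f (L x.1) ≤ ⨆ z : {z : E // ‖z‖ ≤ 1}, f z.1 := by
  have : Nonempty {x : X // ‖x‖ ≤ 1} := ⟨⟨0, by simp⟩⟩
  exact ciSup_le fun x =>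
    le_ciSup_of_le f.bddAbove_range_unitClosedBall ⟨L x, (hL x).trans x.2⟩ le_rfl

end UnitClosedBall

theorem ContinuousLinearMap.antilipschitz_of_mul_norm_le {E F : Type*}
    [SeminormedAddCommGroup E] [NormedSpace ℝ E] [SeminormedAddCommGroup F] [NormedSpace ℝ F]
    (f : E →L[ℝ] F) {γ : ℝ} (hγ : 0 < γ) (h : ∀ x, γ * ‖x‖ ≤ ‖f x‖) :
    AntilipschitzWith (Real.toNNReal γ⁻¹) f :=
  f.antilipschitz_of_bound fun x => by
    rw [Real.coe_toNNReal _ (inv_nonneg.2 hγ.le), ← div_eq_inv_mul, le_div_iff₀' hγ]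
    exact h x

theorem ContinuousLinearMap.bijective_of_inf_sup {Y P : Type*}
    [NormedAddCommGroup Y] [NormedSpace ℝ Y] [CompleteSpace Y]
    [NormedAddCommGroup P] [InnerProductSpace ℝ P] [CompleteSpace P]
    (a : Y →L[ℝ] P →L[ℝ] ℝ) {γ : ℝ} (hγ : 0 < γ)
    (h₁ : ∀ y, γ * ‖y‖ ≤ ‖a y‖) (h₂ : ∀ p, γ * ‖p‖ ≤ ‖a.flip p‖) : Bijective a := by
  refine ⟨(a.antilipschitz_of_mul_norm_le hγ h₁).injective, fun f => ?_⟩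
  let S : Y →L[ℝ] P := (toDual ℝ P).symm.toContinuousLinearEquiv.toContinuousLinearMap ∘L a
  have hS : ∀ y, toDual ℝ P (S y) = a y := fun y => (toDual ℝ P).apply_symm_apply (a y)
  have hS_closed : IsClosed (S.range : Set P) :=
    (S.antilipschitz_of_mul_norm_le hγ fun y => by simpa [S] using h₁ y).isClosed_range
      S.uniformContinuous
  have := hS_closed.completeSpace_coe
  have hS_orth : S.rangeᗮ = ⊥ := by
    refine (Submodule.eq_bot_iff _).2 fun p hp => ?_
    have hp' : a.flip p = 0 := by
      ext y
      rw [ContinuousLinearMap.flip_apply, ← hS, toDual_apply_apply]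
      exact (Submodule.mem_orthogonal _ _).1 hp _ ⟨y, rfl⟩
    exact (a.flip.antilipschitz_of_mul_norm_le hγ h₂).injective (hp'.trans (map_zero _).symm)
  obtain ⟨y, hy⟩ := LinearMap.range_eq_top.1 (Submodule.orthogonal_eq_bot_iff.1 hS_orth)
    ((toDual ℝ P).symm f)
  exact ⟨y, by rw [← hS, show S y = _ from hy, LinearIsometryEquiv.apply_symm_apply]⟩

section KernelCoercivity

variable {Y U P : Type*} [NormedAddCommGroup Y] [NormedSpace ℝ Y]
  [NormedAddCommGroup U] [NormedSpace ℝ U] [NormedAddCommGroup P] [NormedSpace ℝ P]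

theorem norm_le_of_coprod_eq_zero (a : Y →L[ℝ] P →L[ℝ] ℝ) (b : U →L[ℝ] P →L[ℝ] ℝ)
    {γ : ℝ} (hγ : 0 < γ) (ha : ∀ y, γ * ‖y‖ ≤ ‖a y‖) {x : Y × U} (hx : a.coprod b x = 0) :
    ‖x‖ ≤ (‖b‖ / γ + 1) * ‖x.2‖ := by
  have hax : a x.1 = -b x.2 := eq_neg_of_add_eq_zero_left (by simpa using hx)
  have hx₁ : ‖x.1‖ ≤ ‖b‖ / γ * ‖x.2‖ := by
    rw [div_mul_eq_mul_div, le_div_iff₀' hγ]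
    calc γ * ‖x.1‖ ≤ ‖a x.1‖ := ha x.1
      _ = ‖b x.2‖ := by rw [hax, norm_neg]
      _ ≤ ‖b‖ * ‖x.2‖ := b.le_opNorm x.2
  calc ‖x‖ ≤ ‖x.1‖ + ‖x.2‖ :=
        (Prod.norm_def x).trans_le (max_le_add_of_nonneg (norm_nonneg _) (norm_nonneg _))
    _ ≤ (‖b‖ / γ + 1) * ‖x.2‖ := by rw [add_one_mul]; linarith

theorem exists_mul_sq_le_of_coprod_eq_zero (a : Y →L[ℝ] P →L[ℝ] ℝ) (b : U →L[ℝ] P →L[ℝ] ℝ)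
    {γ : ℝ} (hγ : 0 < γ) (ha : ∀ y, γ * ‖y‖ ≤ ‖a y‖) {q : Y × U → ℝ} {κ : ℝ} (hκ : 0 < κ)
    (hq : ∀ x, κ * ‖x.2‖ ^ 2 ≤ q x) :
    ∃ c > 0, ∀ x, a.coprod b x = 0 → c * ‖x‖ ^ 2 ≤ q x := by
  set K := ‖b‖ / γ + 1
  have hK : 0 < K := by positivity
  refine ⟨κ / K ^ 2, by positivity, fun x hx => ?_⟩
  calc κ / K ^ 2 * ‖x‖ ^ 2 ≤ κ / K ^ 2 * (K * ‖x.2‖) ^ 2 := by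
        gcongr; exact norm_le_of_coprod_eq_zero a b hγ ha hx
    _ = κ * ‖x.2‖ ^ 2 := by field_simp
    _ ≤ q x := hq x

end KernelCoercivity

theorem eq_zero_of_saddlePoint_eq_zero {X P : Type*} [NormedAddCommGroup X] [NormedSpace ℝ X]
    [NormedAddCommGroup P] [NormedSpace ℝ P]
    (D : X →L[ℝ] X →L[ℝ] ℝ) (E : X →L[ℝ] P →L[ℝ] ℝ) {c : ℝ} (hc : 0 < c)
    (hD : ∀ x, E x = 0 → c * ‖x‖ ^ 2 ≤ D x x) (hE : Injective E.flip) {x : X} {p : P}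
    (h₁ : ∀ w, D x w + E w p = 0) (h₂ : E x = 0) : x = 0 ∧ p = 0 := by
  obtain rfl : x = 0 := by
    have hDx : D x x = 0 := by simpa [h₂] using h₁ x
    have : c * ‖x‖ ^ 2 ≤ 0 := hDx ▸ hD x h₂
    have : ‖x‖ ^ 2 ≤ 0 := nonpos_of_mul_nonpos_right this hc
    simpa using this
  refine ⟨rfl, hE ?_⟩
  ext w
  simpa using h₁ w

section SaddlePoint

variable {Y U P : Type*} [NormedAddCommGroup Y] [NormedSpace ℝ Y] [CompleteSpace Y]
  [NormedAddCommGroup U] [InnerProductSpace ℝ U] [CompleteSpace U]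
  [NormedAddCommGroup P] [NormedSpace ℝ P]

theorem exists_saddlePoint (a : Y →L[ℝ] P →L[ℝ] ℝ) (b : U →L[ℝ] P →L[ℝ] ℝ)
    (D : (Y × U) →L[ℝ] (Y × U) →L[ℝ] ℝ) (ha : Bijective a) (ha' : Surjective a.flip)
    {c : ℝ} (hc : 0 < c) (hD : ∀ x, a.coprod b x = 0 → c * ‖x‖ ^ 2 ≤ D x x)
    (g : (Y × U) →L[ℝ] ℝ) (F : P →L[ℝ] ℝ) :
    ∃ x p, (∀ w, D x w + a.coprod b w p = g w) ∧ a.coprod b x = F := by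
  set E := a.coprod b
  let e := ContinuousLinearEquiv.ofBijective a (LinearMap.ker_eq_bot.2 ha.1)
    (LinearMap.range_eq_top.2 ha.2)
  -- `L` parametrizes `ker E` as the graph of `-a⁻¹ ∘ b`
  let L : U →L[ℝ] Y × U := (-(e.symm.toContinuousLinearMap ∘L b)).prod (.id ℝ U)
  have hL : ∀ u, E (L u) = 0 := fun u => by simp [E, L, e]
  have hk : IsCoercive (D.bilinearComp L L) := ⟨c, hc, fun u => calc
      c * ‖u‖ * ‖u‖ = c * ‖(L u).2‖ ^ 2 := by rw [show (L u).2 = u from rfl]; ring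
      _ ≤ c * ‖L u‖ ^ 2 := by gcongr; exact norm_snd_le _
      _ ≤ D (L u) (L u) := hD _ (hL u)⟩
  let x₀ : Y × U := (e.symm F, 0)
  obtain ⟨u, hu⟩ : ∃ u, ∀ v, D (L u) (L v) = (g - D x₀) (L v) :=
    ⟨hk.continuousLinearEquivOfBilin.symm ((toDual ℝ U).symm ((g - D x₀) ∘L L)), fun v => by
      rw [← ContinuousLinearMap.bilinearComp_apply, ← hk.continuousLinearEquivOfBilin_apply,
        ContinuousLinearEquiv.apply_symm_apply, toDual_symm_apply]
      rfl⟩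
  set x := x₀ + L u
  have hres : ∀ v, (g - D x) (L v) = 0 := fun v => by simp [x, hu v]
  obtain ⟨p, hp⟩ := ha' ((g - D x) ∘L .inl ℝ Y U)
  refine ⟨x, p, fun w => ?_, ?_⟩
  · set z := w.1 - (L w.2).1
    have hw : w = (z, 0) + L w.2 := by ext <;> simp [z, L]
    have hEp : E w p = (g - D x) w := calc
      E w p = E (z, 0) p + E (L w.2) p := by rw [← add_apply, ← map_add, ← hw]
      _ = (g - D x) (z, 0) + (g - D x) (L w.2) := by
        rw [hL, hres]
        simpa [E] using DFunLike.congr_fun hp z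
      _ = (g - D x) w := by rw [← map_add, ← hw]
    rw [hEp, sub_apply]
    ring
  · simp only [x, map_add, hL, add_zero]
    simp [E, x₀, e]

theorem existsUnique_saddlePoint (a : Y →L[ℝ] P →L[ℝ] ℝ) (b : U →L[ℝ] P →L[ℝ] ℝ)
    (D : (Y × U) →L[ℝ] (Y × U) →L[ℝ] ℝ) (ha : Bijective a) (ha' : Bijective a.flip)
    {c : ℝ} (hc : 0 < c) (hD : ∀ x, a.coprod b x = 0 → c * ‖x‖ ^ 2 ≤ D x x)
    (g : (Y × U) →L[ℝ] ℝ) (F : P →L[ℝ] ℝ) :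
    ∃! xp : (Y × U) × P, (∀ w, D xp.1 w + a.coprod b w xp.2 = g w) ∧ a.coprod b xp.1 = F := by
  obtain ⟨x, p, h₁, h₂⟩ := exists_saddlePoint a b D ha ha'.2 hc hD g F
  have hE : Injective (a.coprod b).flip := by
    refine (injective_iff_map_eq_zero _).2 fun q hq => ha'.1 ?_
    ext y
    simpa using DFunLike.congr_fun hq (y, 0)
  refine ⟨(x, p), ⟨h₁, h₂⟩, fun ⟨x', p'⟩ ⟨h₁', h₂'⟩ => ?_⟩
  obtain ⟨hx, hp⟩ := eq_zero_of_saddlePoint_eq_zero D (a.coprod b) hc hD hE (x := x' - x)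
    (p := p' - p) (fun w => by simp only [map_sub, sub_apply]; linarith [h₁ w, h₁' w])
    (by rw [map_sub, h₂, h₂', sub_self])
  exact Prod.ext (sub_eq_zero.1 hx) (sub_eq_zero.1 hp)

end SaddlePoint

theorem stmt_3_general {Y U Z P : Type*}
    [NormedAddCommGroup Y] [InnerProductSpace ℝ Y] [CompleteSpace Y]
    [NormedAddCommGroup U] [InnerProductSpace ℝ U] [CompleteSpace U]
    [NormedAddCommGroup Z] [NormedSpace ℝ Z]
    [NormedAddCommGroup P] [InnerProductSpace ℝ P] [CompleteSpace P]
    (a : Y →L[ℝ] P →L[ℝ] ℝ) (b : U →L[ℝ] P →L[ℝ] ℝ)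
    (O : Y →L[ℝ] Z) (m : Z →L[ℝ] Z →L[ℝ] ℝ) (n : U →L[ℝ] U →L[ℝ] ℝ)
    (α : ℝ) (hα : 0 < α)
    (hm_pos : ∀ z : Z, 0 ≤ m z z)
    (cn : ℝ) (hcn : 0 < cn) (hn_coer : ∀ u : U, cn * ‖u‖ ^ 2 ≤ n u u)
    -- A(μ) weakly coercive: both inf-sup conditions for the form a
    (γ : ℝ) (hγ : 0 < γ)
    (ha1 : ∀ y : Y, γ * ‖y‖ ≤ ⨆ p : {p : P // ‖p‖ ≤ 1}, a y p.1)
    (ha2 : ∀ p : P, γ * ‖p‖ ≤ ⨆ y : {y : Y // ‖y‖ ≤ 1}, a y.1 p) :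
    -- E(μ) is inf-sup stable
    (∃ β > 0, ∀ p : P,
      β * ‖p‖ ≤ ⨆ x : {x : Y × U // ‖x‖ ≤ 1}, (a x.1.1 p + b x.1.2 p)) ∧
    -- D(μ) is coercive over the kernel of E(μ)
    (∃ c > 0, ∀ x : Y × U, (∀ p : P, a x.1 p + b x.2 p = 0) →
      c * ‖x‖ ^ 2 ≤ m (O x.1) (O x.1) + α * n x.2 x.2) ∧
    -- consequently the saddle-point optimality system has a unique solution
    (∀ (g : (Y × U) →L[ℝ] ℝ) (F : P →L[ℝ] ℝ),
      ∃! xp : (Y × U) × P,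
        (∀ w : Y × U,
          m (O xp.1.1) (O w.1) + α * n xp.1.2 w.2 + a w.1 xp.2 + b w.2 xp.2 = g w) ∧
        (∀ q : P, a xp.1.1 q + b xp.1.2 q = F q)) := by
  have hA : ∀ y, γ * ‖y‖ ≤ ‖a y‖ := fun y => (ha1 y).trans (a y).iSup_unitClosedBall_le_opNorm
  have hA' : ∀ p, γ * ‖p‖ ≤ ‖a.flip p‖ := fun p =>
    (ha2 p).trans (a.flip p).iSup_unitClosedBall_le_opNorm
  let D : (Y × U) →L[ℝ] (Y × U) →L[ℝ] ℝ :=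
    (m.bilinearComp O O).bilinearComp (.fst ℝ Y U) (.fst ℝ Y U) +
      (α • n).bilinearComp (.snd ℝ Y U) (.snd ℝ Y U)
  have hD : ∀ x w, D x w = m (O x.1) (O w.1) + α * n x.2 w.2 := fun _ _ => rfl
  have hker : ∀ x : Y × U, a.coprod b x = 0 ↔ ∀ p, a x.1 p + b x.2 p = 0 := fun x => by
    simp [ContinuousLinearMap.ext_iff]
  obtain ⟨c, hc, hcoer⟩ := exists_mul_sq_le_of_coprod_eq_zero a b hγ hA (q := fun x => D x x)
    (mul_pos hα hcn) fun x => by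
      rw [hD, mul_assoc]
      exact le_add_of_nonneg_of_le (hm_pos _) (mul_le_mul_of_nonneg_left (hn_coer _) hα.le)
  refine ⟨⟨γ, hγ, fun p => (ha2 p).trans ?_⟩, ⟨c, hc, fun x hx => hcoer x ((hker x).2 hx)⟩,
    fun g F => ?_⟩
  · simpa using ((a.flip p).coprod (b.flip p)).iSup_unitClosedBall_comp_le
      (L := fun y : Y => (y, (0 : U))) (by simp [Prod.norm_def])
  · simpa [hD, add_assoc, ContinuousLinearMap.ext_iff] using existsUnique_saddlePoint a b D
      (a.bijective_of_inf_sup hγ hA hA') (a.flip.bijective_of_inf_sup hγ hA' (by simpa using hA))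
      hc hcoer g F

/-- For the linear-quadratic OCP: if `Y, U` are reflexive Hilbert spaces, the state form
`a` (associated with `A(μ)`) is weakly coercive, `b` (associated with `B(μ)`) is not zero,
`α n` is coercive with `α > 0`, and `m(z,z) ≥ 0`, then `E(μ) = (A(μ), B(μ))` is inf-sup
stable, `D(μ) = diag(O*M O, αN)` is coercive over `ker E(μ)`, and consequently the
saddle-point optimality system has a unique solution. (The adjoint space `Q*` is modelled
by the Hilbert space `P`, and the operators by their associated bilinear forms.) -/
theorem stmt_3 {Y U Z P : Type*}
    [NormedAddCommGroup Y] [InnerProductSpace ℝ Y] [CompleteSpace Y]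
    [NormedAddCommGroup U] [InnerProductSpace ℝ U] [CompleteSpace U]
    [NormedAddCommGroup Z] [NormedSpace ℝ Z] [CompleteSpace Z]
    [NormedAddCommGroup P] [InnerProductSpace ℝ P] [CompleteSpace P]
    (a : Y →L[ℝ] P →L[ℝ] ℝ) (b : U →L[ℝ] P →L[ℝ] ℝ)
    (O : Y →L[ℝ] Z) (m : Z →L[ℝ] Z →L[ℝ] ℝ) (n : U →L[ℝ] U →L[ℝ] ℝ)
    (α : ℝ) (hα : 0 < α)
    (hm_symm : ∀ z z' : Z, m z z' = m z' z) (hm_pos : ∀ z : Z, 0 ≤ m z z)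
    (hn_symm : ∀ u u' : U, n u u' = n u' u)
    (cn : ℝ) (hcn : 0 < cn) (hn_coer : ∀ u : U, cn * ‖u‖ ^ 2 ≤ n u u)
    -- A(μ) weakly coercive: both inf-sup conditions for the form a
    (γ : ℝ) (hγ : 0 < γ)
    (ha1 : ∀ y : Y, γ * ‖y‖ ≤ ⨆ p : {p : P // ‖p‖ ≤ 1}, a y p.1)
    (ha2 : ∀ p : P, γ * ‖p‖ ≤ ⨆ y : {y : Y // ‖y‖ ≤ 1}, a y.1 p)
    -- B(μ) is not the null operator
    (hb : ∃ (u : U) (p : P), b u p ≠ 0) :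
    -- E(μ) is inf-sup stable
    (∃ β > 0, ∀ p : P,
      β * ‖p‖ ≤ ⨆ x : {x : Y × U // ‖x‖ ≤ 1}, (a x.1.1 p + b x.1.2 p)) ∧
    -- D(μ) is coercive over the kernel of E(μ)
    (∃ c > 0, ∀ x : Y × U, (∀ p : P, a x.1 p + b x.2 p = 0) →
      c * ‖x‖ ^ 2 ≤ m (O x.1) (O x.1) + α * n x.2 x.2) ∧
    -- consequently the saddle-point optimality system has a unique solution
    (∀ (g : (Y × U) →L[ℝ] ℝ) (F : P →L[ℝ] ℝ),
      ∃! xp : (Y × U) × P,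
        (∀ w : Y × U,
          m (O xp.1.1) (O w.1) + α * n xp.1.2 w.2 + a w.1 xp.2 + b w.2 xp.2 = g w) ∧
        (∀ q : P, a xp.1.1 q + b xp.1.2 q = F q)) :=
  stmt_3_general a b O m n α hα hm_pos cn hcn hn_coer γ hγ ha1 ha2
end

section
/- (POD optimality) Among all N-dimensional subspaces V of the span of the snapshots y_1,…,y_M in a Hilbert space Y, the POD space Y^N spanned by the first N POD modes minimizes the mean squared projection error (1/M) Σ_{k=1}^M ‖y_k − Π_V y_k‖²_Y, where Π_V denotes the Y-orthogonal projection onto V, and the minimal value equals Σ_{k=N+1}^M λ_k. -/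
/-!
Put `z n = ∑ k, e n k • y k`. The eigenvector equations make the `z n` pairwise orthogonal with
`‖z n‖² = M λ_n`, and orthonormality of `e` gives `y k = ∑ n, e n k • z n`; hence for every
orthogonal projection `Π` the error `∑ k ‖y k - Π y k‖²` equals
`∑ n ‖z n - Π z n‖² = ∑ n ‖z n‖² (1 - t n)` with `t n = ‖Π z n‖² / ‖z n‖² ∈ [0, 1]`.
If `Π` projects onto an `N`-dimensional space, Bessel's inequality gives `∑ n, t n ≤ N`, and as
`λ` is decreasing the weighted sum is smallest when `t` is the indicator of the first `N`
indices, which is what the projection onto the POD space achieves.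
-/

open scoped RealInnerProductSpace
open Finset Matrix

theorem sum_mul_le_sum_filter_lt {M N : ℕ} {a t : Fin M → ℝ} (ha : Antitone a)
    (ha0 : ∀ n, 0 ≤ a n) (ht0 : ∀ n, 0 ≤ t n) (ht1 : ∀ n, t n ≤ 1) (ht : ∑ n, t n ≤ N) :
    ∑ n, a n * t n ≤ ∑ n ∈ univ.filter (fun n : Fin M => (n : ℕ) < N), a n := by
  by_cases hNM : N < M
  · set L := a ⟨N, hNM⟩
    -- compare each term with the threshold `L = a N`; after summing, the `L`-terms add up to
    -- `L * (∑ t - N) ≤ 0`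
    have hL : ∀ n : Fin M, a n * t n ≤ (if (n : ℕ) < N then a n else 0) +
        L * (t n - if (n : ℕ) < N then 1 else 0) := by
      intro n
      split_ifs with hn
      · have : L ≤ a n := ha (Fin.mk_le_of_le_val hn.le)
        nlinarith [ht1 n]
      · have : a n ≤ L := ha (Fin.le_def.mpr (not_lt.mp hn))
        nlinarith [ht0 n]
    have hcard : (#(univ.filter fun n : Fin M => (n : ℕ) < N) : ℝ) = N := by
      rw [Fin.card_filter_val_lt, min_eq_right hNM.le]
    calc ∑ n, a n * t n
        ≤ ∑ n : Fin M,
            ((if (n : ℕ) < N then a n else 0) + L * (t n - if (n : ℕ) < N then 1 else 0)) :=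
          sum_le_sum fun n _ => hL n
      _ = ∑ n ∈ univ.filter (fun n : Fin M => (n : ℕ) < N), a n + L * (∑ n, t n - N) := by
          rw [sum_add_distrib, ← mul_sum, sum_sub_distrib, sum_ite, sum_boole, hcard]
          simp
      _ ≤ ∑ n ∈ univ.filter (fun n : Fin M => (n : ℕ) < N), a n := by nlinarith [ha0 ⟨N, hNM⟩]
  · rw [filter_true_of_mem fun n _ => n.2.trans_le (not_lt.mp hNM)]
    exact sum_le_sum fun n _ => mul_le_of_le_one_right (ha0 n) (ht1 n)

section Projection

variable {Y : Type*} [NormedAddCommGroup Y] [InnerProductSpace ℝ Y]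

theorem Orthonormal.sum_norm_sq_starProjection_le {ι : Type*} [Fintype ι] {u : ι → Y}
    (hu : Orthonormal ℝ u) (V : Submodule ℝ Y) [FiniteDimensional ℝ V] :
    ∑ i, ‖V.starProjection (u i)‖ ^ 2 ≤ Module.finrank ℝ V := by
  let b := stdOrthonormalBasis ℝ V
  have parseval : ∀ x, ‖V.starProjection x‖ ^ 2 = ∑ j, ⟪(b j : Y), x⟫ ^ 2 := fun x => by
    rw [Submodule.starProjection_apply, Submodule.norm_coe, ← b.sum_sq_norm_inner_right]
    simp only [Submodule.inner_orthogonalProjectionOnto_eq_of_mem_left, Real.norm_eq_abs, sq_abs]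
  calc ∑ i, ‖V.starProjection (u i)‖ ^ 2 = ∑ j, ∑ i, ⟪u i, (b j : Y)⟫ ^ 2 := by
        simp_rw [parseval, real_inner_comm (u _)]
        exact sum_comm
    _ ≤ ∑ j, ‖(b j : Y)‖ ^ 2 := sum_le_sum fun j _ => by
        simpa only [Real.norm_eq_abs, sq_abs] using hu.sum_inner_products_le (b j : Y) (s := univ)
    _ = Module.finrank ℝ V := by
        simp only [Submodule.norm_coe, b.orthonormal.1, one_pow, sum_const, card_univ,
          Fintype.card_fin, nsmul_eq_mul, mul_one]

theorem orthonormal_normalize {ι : Type*} {z : ι → Y} (hz : Pairwise fun i j => ⟪z i, z j⟫ = 0) :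
    Orthonormal ℝ fun i : {i // z i ≠ 0} => ‖z i‖⁻¹ • z i := by
  refine ⟨fun i => norm_smul_inv_norm i.2, fun i j hij => ?_⟩
  dsimp only
  rw [real_inner_smul_left, real_inner_smul_right, hz (Subtype.coe_ne_coe.mpr hij), mul_zero,
    mul_zero]

theorem sum_norm_sq_starProjection_div_le {ι : Type*} [Fintype ι] {z : ι → Y}
    (hz : Pairwise fun i j => ⟪z i, z j⟫ = 0) (V : Submodule ℝ Y) [FiniteDimensional ℝ V] :
    ∑ i, ‖V.starProjection (z i)‖ ^ 2 / ‖z i‖ ^ 2 ≤ Module.finrank ℝ V := by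
  classical
  calc ∑ i, ‖V.starProjection (z i)‖ ^ 2 / ‖z i‖ ^ 2
      = ∑ i : {i // z i ≠ 0}, ‖V.starProjection (‖z i‖⁻¹ • z i)‖ ^ 2 := by
        rw [← Fintype.sum_subtype_add_sum_subtype (fun i => z i ≠ 0),
          Fintype.sum_eq_zero (fun i : {i // ¬z i ≠ 0} => _) fun i => by simp [not_not.mp i.2]]
        simp [norm_smul, mul_pow, div_eq_inv_mul]
    _ ≤ _ := (orthonormal_normalize hz).sum_norm_sq_starProjection_le V

theorem sum_norm_sq_starProjection_le_sum_filter_lt {M N : ℕ} {z : Fin M → Y}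
    (hz : Pairwise fun i j => ⟪z i, z j⟫ = 0) (hanti : Antitone fun n => ‖z n‖ ^ 2)
    (V : Submodule ℝ Y) [FiniteDimensional ℝ V] (hV : Module.finrank ℝ V ≤ N) :
    ∑ n, ‖V.starProjection (z n)‖ ^ 2 ≤
      ∑ n ∈ univ.filter (fun n : Fin M => (n : ℕ) < N), ‖z n‖ ^ 2 := by
  have hmul : ∀ n, ‖z n‖ ^ 2 * (‖V.starProjection (z n)‖ ^ 2 / ‖z n‖ ^ 2) =
      ‖V.starProjection (z n)‖ ^ 2 := fun n => by
    rcases eq_or_ne (z n) 0 with hn | hn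
    · simp [hn]
    · field_simp
  rw [← sum_congr rfl fun n _ => hmul n]
  refine sum_mul_le_sum_filter_lt hanti (fun n => by positivity) (fun n => by positivity)
    (fun n => div_le_one_of_le₀ ?_ (by positivity)) ?_
  · gcongr
    exact V.norm_starProjection_apply_le (z n)
  · exact (sum_norm_sq_starProjection_div_le hz V).trans (by exact_mod_cast hV)

theorem sum_filter_le_sum_norm_sq_sub_starProjection {M N : ℕ} {z : Fin M → Y}
    (hz : Pairwise fun i j => ⟪z i, z j⟫ = 0) (hanti : Antitone fun n => ‖z n‖ ^ 2)
    (V : Submodule ℝ Y) [FiniteDimensional ℝ V] (hV : Module.finrank ℝ V ≤ N) :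
    ∑ n ∈ univ.filter (fun n : Fin M => N ≤ (n : ℕ)), ‖z n‖ ^ 2 ≤
      ∑ n, ‖z n - V.starProjection (z n)‖ ^ 2 := by
  have pythagoras : ∀ n, ‖z n - V.starProjection (z n)‖ ^ 2 =
      ‖z n‖ ^ 2 - ‖V.starProjection (z n)‖ ^ 2 := fun n => by
    rw [V.norm_sq_eq_add_norm_sq_starProjection (z n), Submodule.starProjection_orthogonal_val]
    ring
  have hsplit := sum_filter_add_sum_filter_not univ (fun n : Fin M => (n : ℕ) < N)
    fun n => ‖z n‖ ^ 2
  simp only [not_lt] at hsplit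
  rw [sum_congr rfl fun n _ => pythagoras n, sum_sub_distrib]
  linarith [sum_norm_sq_starProjection_le_sum_filter_lt hz hanti V hV]

theorem eq_starProjection_of_forall {K : Submodule ℝ Y} [K.HasOrthogonalProjection] {P : Y → Y}
    (hmem : ∀ v, P v ∈ K) (horth : ∀ v, ∀ w ∈ K, ⟪v - P v, w⟫ = 0) : P = K.starProjection :=
  funext fun v => (K.eq_starProjection_of_mem_of_inner_eq_zero (hmem v) (horth v)).symm

theorem sum_norm_sq_sub_starProjection_eq_sum_filter {M N : ℕ} {z : Fin M → Y}
    (S : Submodule ℝ Y) [S.HasOrthogonalProjection]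
    (hmem : ∀ n : Fin M, (n : ℕ) < N → z n ∈ S) (horth : ∀ n : Fin M, N ≤ (n : ℕ) → z n ∈ Sᗮ) :
    ∑ n, ‖z n - S.starProjection (z n)‖ ^ 2 =
      ∑ n ∈ univ.filter (fun n : Fin M => N ≤ (n : ℕ)), ‖z n‖ ^ 2 := by
  rw [sum_filter]
  refine sum_congr rfl fun n _ => ?_
  split_ifs with hn
  · rw [(S.starProjection_apply_eq_zero_iff).mpr (horth n hn), sub_zero]
  · rw [Submodule.starProjection_eq_self_iff.mpr (hmem n (not_le.mp hn)), sub_self, norm_zero]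
    norm_num

end Projection

section POD

variable {Y : Type*} [NormedAddCommGroup Y] [InnerProductSpace ℝ Y]

theorem sum_norm_sq_sum_smul_of_orthonormal_rows {ι κ : Type*} [Fintype ι] [Fintype κ]
    [DecidableEq ι] {e : ι → κ → ℝ} (horth : ∀ n m, e n ⬝ᵥ e m = if n = m then 1 else 0)
    (x : ι → Y) :
    ∑ k, ‖∑ n, e n k • x n‖ ^ 2 = ∑ n, ‖x n‖ ^ 2 := by
  simp_rw [← real_inner_self_eq_norm_sq, sum_inner, inner_sum, real_inner_smul_left,
    real_inner_smul_right]
  calc ∑ k, ∑ n, ∑ m, e n k * (e m k * ⟪x n, x m⟫)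
      = ∑ n, ∑ m, (e n ⬝ᵥ e m) * ⟪x n, x m⟫ := by
        rw [sum_comm]
        refine sum_congr rfl fun n _ => ?_
        rw [sum_comm]
        refine sum_congr rfl fun m _ => ?_
        rw [dotProduct, sum_mul]
        exact sum_congr rfl fun k _ => by ring
    _ = ∑ n, ⟪x n, x n⟫ := by simp [horth]

variable {M : ℕ} (y : Fin M → Y) (e : Fin M → Fin M → ℝ)

/-- `podMode y e n = √(λ n) • η n` is the `n`-th POD mode before normalisation; unlike `η n` it
makes sense also when `λ n = 0`. -/
def podMode (n : Fin M) : Y := ∑ k, e n k • y k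

variable {y e}

theorem sum_smul_podMode (horth : ∀ n m, e n ⬝ᵥ e m = if n = m then 1 else 0) (k : Fin M) :
    ∑ n, e n k • podMode y e n = y k := by
  have hcols : (Matrix.of e)ᵀ * Matrix.of e = 1 := by
    refine mul_eq_one_comm.mp ?_
    ext n m
    simpa [Matrix.mul_apply, Matrix.one_apply, dotProduct] using horth n m
  have hcol : ∀ l, ∑ n, e n k * e n l = if k = l then 1 else 0 := fun l => by
    simpa [Matrix.mul_apply, Matrix.one_apply] using congrFun (congrFun hcols k) l
  simp_rw [podMode, smul_sum, smul_smul]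
  rw [sum_comm]
  simp_rw [← sum_smul, hcol, ite_smul, one_smul, zero_smul, sum_ite_eq, mem_univ, if_true]

theorem inner_podMode (hM : 0 < M) {C : Matrix (Fin M) (Fin M) ℝ}
    (hC : ∀ i j, C i j = (1 / (M : ℝ)) * ⟪y i, y j⟫) {lam : Fin M → ℝ}
    (heig : ∀ n, C *ᵥ e n = lam n • e n)
    (horth : ∀ n m, e n ⬝ᵥ e m = if n = m then 1 else 0) (n m : Fin M) :
    ⟪podMode y e n, podMode y e m⟫ = if n = m then M * lam n else 0 := by
  have hgram : gram ℝ y = (M : ℝ) • C := by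
    refine Matrix.ext fun i j => ?_
    rw [gram_apply, Matrix.smul_apply, hC, smul_eq_mul]
    field_simp
  rw [podMode, podMode, ← star_dotProduct_gram_mulVec, star_trivial, hgram, smul_mulVec,
    heig, dotProduct_smul, dotProduct_smul, horth]
  split_ifs with h <;> simp [h]

theorem sum_norm_sq_sub_eq_sum_podMode (horth : ∀ n m, e n ⬝ᵥ e m = if n = m then 1 else 0)
    (Q : Y →L[ℝ] Y) :
    ∑ k, ‖y k - Q (y k)‖ ^ 2 = ∑ n, ‖podMode y e n - Q (podMode y e n)‖ ^ 2 := by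
  have hres : ∀ k, y k - Q (y k) = ∑ n, e n k • (podMode y e n - Q (podMode y e n)) := by
    intro k
    conv_lhs => rw [← sum_smul_podMode (y := y) horth k]
    simp only [map_sum, map_smul, smul_sub, sum_sub_distrib]
  simp_rw [hres]
  exact sum_norm_sq_sum_smul_of_orthonormal_rows horth _

variable {N : ℕ} {lam : Fin M → ℝ} {η : Fin M → Y}

theorem podMode_mem_span_of_lt (hpos : ∀ n : Fin M, (n : ℕ) < N → 0 < lam n)
    (hη : ∀ n : Fin M, (n : ℕ) < N → η n = (Real.sqrt (lam n))⁻¹ • ∑ k, e n k • y k)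
    {n : Fin M} (hn : (n : ℕ) < N) :
    podMode y e n ∈ Submodule.span ℝ {v | ∃ n : Fin M, (n : ℕ) < N ∧ v = η n} := by
  have hzη : podMode y e n = Real.sqrt (lam n) • η n := by
    rw [hη n hn, smul_smul, mul_inv_cancel₀ (Real.sqrt_pos.mpr (hpos n hn)).ne', one_smul,
      podMode]
  rw [hzη]
  exact Submodule.smul_mem _ _ (Submodule.subset_span ⟨n, hn, rfl⟩)

theorem podMode_mem_orthogonal_span_of_le
    (hz : Pairwise fun n m => ⟪podMode y e n, podMode y e m⟫ = 0)
    (hη : ∀ n : Fin M, (n : ℕ) < N → η n = (Real.sqrt (lam n))⁻¹ • ∑ k, e n k • y k)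
    {n : Fin M} (hn : N ≤ (n : ℕ)) :
    podMode y e n ∈ (Submodule.span ℝ {v | ∃ n : Fin M, (n : ℕ) < N ∧ v = η n})ᗮ := by
  refine (Submodule.isOrtho_span.mpr ?_).ge (Submodule.mem_span_singleton_self _)
  rintro _ ⟨m, hm, rfl⟩ _ rfl
  rw [hη m hm, real_inner_smul_left]
  exact mul_eq_zero_of_right _ (hz (Fin.ne_of_val_ne (by omega)))

end POD

theorem stmt_10_general {Y : Type*} [NormedAddCommGroup Y] [InnerProductSpace ℝ Y]
    (M N : ℕ) (hM : 0 < M) (y : Fin M → Y)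
    (C : Matrix (Fin M) (Fin M) ℝ)
    (hC : ∀ i j, C i j = (1 / (M : ℝ)) * ⟪y i, y j⟫)
    (lam : Fin M → ℝ) (e : Fin M → (Fin M → ℝ))
    (heig : ∀ n, C.mulVec (e n) = lam n • e n)
    (horth : ∀ n m, dotProduct (e n) (e m) = if n = m then 1 else 0)
    (hsort : ∀ i j : Fin M, i ≤ j → lam j ≤ lam i)
    (hpos : ∀ n : Fin M, (n : ℕ) < N → 0 < lam n)
    (η : Fin M → Y)
    (hη : ∀ n : Fin M, (n : ℕ) < N →
      η n = (Real.sqrt (lam n))⁻¹ • ∑ k, e n k • y k)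
    (S : Submodule ℝ Y)
    (hS : S = Submodule.span ℝ {v | ∃ n : Fin M, (n : ℕ) < N ∧ v = η n})
    (P : Y → Y) (hPmem : ∀ v, P v ∈ S) (hPorth : ∀ v, ∀ w ∈ S, ⟪v - P v, w⟫ = 0) :
    -- lower bound for every N-dimensional subspace V of the snapshot span
    (∀ V : Submodule ℝ Y, V ≤ Submodule.span ℝ (Set.range y) →
      Module.finrank ℝ V = N →
      ∀ PV : Y → Y, (∀ v, PV v ∈ V) → (∀ v, ∀ w ∈ V, ⟪v - PV v, w⟫ = 0) →
        (∑ k ∈ Finset.univ.filter (fun k : Fin M => N ≤ (k : ℕ)), lam k) ≤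
          (1 / (M : ℝ)) * ∑ k, ‖y k - PV (y k)‖ ^ 2) ∧
    -- the POD space attains the minimum
    ((1 / (M : ℝ)) * ∑ k, ‖y k - P (y k)‖ ^ 2 =
      ∑ k ∈ Finset.univ.filter (fun k : Fin M => N ≤ (k : ℕ)), lam k) := by
  set z := podMode y e
  have hzz := inner_podMode hM hC heig horth
  have hz : Pairwise fun n m => ⟪z n, z m⟫ = 0 := fun n m h => (hzz n m).trans (if_neg h)
  have hnorm : ∀ n, ‖z n‖ ^ 2 = M * lam n := fun n => by
    rw [← real_inner_self_eq_norm_sq, hzz, if_pos rfl]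
  have htail : ∑ k ∈ univ.filter (fun k : Fin M => N ≤ (k : ℕ)), lam k =
      1 / (M : ℝ) * ∑ n ∈ univ.filter (fun k : Fin M => N ≤ (k : ℕ)), ‖z n‖ ^ 2 := by
    simp_rw [hnorm, ← mul_sum]
    field_simp
  refine ⟨fun V hV hrank PV hPVmem hPVorth => ?_, ?_⟩
  · have := FiniteDimensional.span_of_finite ℝ (Set.finite_range y)
    have : FiniteDimensional ℝ V := Submodule.finiteDimensional_of_le hV
    have hanti : Antitone fun n => ‖z n‖ ^ 2 := fun i j hij => by
      dsimp only
      rw [hnorm, hnorm]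
      exact mul_le_mul_of_nonneg_left (hsort i j hij) M.cast_nonneg
    rw [eq_starProjection_of_forall hPVmem hPVorth, sum_norm_sq_sub_eq_sum_podMode horth, htail]
    exact mul_le_mul_of_nonneg_left
      (sum_filter_le_sum_norm_sq_sub_starProjection hz hanti V hrank.le) (by positivity)
  · subst hS
    have hfin : {v | ∃ n : Fin M, (n : ℕ) < N ∧ v = η n}.Finite :=
      (Set.finite_range η).subset (by rintro _ ⟨n, -, rfl⟩; exact ⟨n, rfl⟩)
    have := FiniteDimensional.span_of_finite ℝ hfin
    rw [eq_starProjection_of_forall hPmem hPorth, sum_norm_sq_sub_eq_sum_podMode horth, htail,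
      sum_norm_sq_sub_starProjection_eq_sum_filter _ (fun _ => podMode_mem_span_of_lt hpos hη)
        (fun _ => podMode_mem_orthogonal_span_of_le hz hη)]

/-- POD optimality: among all `N`-dimensional subspaces `V` of the span of the snapshots, the
POD space `Y^N` minimizes the mean squared projection error
`(1/M) Σ_k ‖y_k − Π_V y_k‖²`, and the minimal value equals `Σ_{k=N+1}^M λ_k`. -/
theorem stmt_10 {Y : Type*} [NormedAddCommGroup Y] [InnerProductSpace ℝ Y]
    (M N : ℕ) (hM : 0 < M) (hN : N ≤ M) (y : Fin M → Y)
    (C : Matrix (Fin M) (Fin M) ℝ)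
    (hC : ∀ i j, C i j = (1 / (M : ℝ)) * ⟪y i, y j⟫)
    (lam : Fin M → ℝ) (e : Fin M → (Fin M → ℝ))
    (heig : ∀ n, C.mulVec (e n) = lam n • e n)
    (horth : ∀ n m, dotProduct (e n) (e m) = if n = m then 1 else 0)
    (hsort : ∀ i j : Fin M, i ≤ j → lam j ≤ lam i)
    (hnonneg : ∀ n, 0 ≤ lam n)
    (hpos : ∀ n : Fin M, (n : ℕ) < N → 0 < lam n)
    (η : Fin M → Y)
    (hη : ∀ n : Fin M, (n : ℕ) < N →
      η n = (Real.sqrt (lam n))⁻¹ • ∑ k, e n k • y k)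
    (S : Submodule ℝ Y)
    (hS : S = Submodule.span ℝ {v | ∃ n : Fin M, (n : ℕ) < N ∧ v = η n})
    (P : Y → Y) (hPmem : ∀ v, P v ∈ S) (hPorth : ∀ v, ∀ w ∈ S, ⟪v - P v, w⟫ = 0) :
    -- lower bound for every N-dimensional subspace V of the snapshot span
    (∀ V : Submodule ℝ Y, V ≤ Submodule.span ℝ (Set.range y) →
      Module.finrank ℝ V = N →
      ∀ PV : Y → Y, (∀ v, PV v ∈ V) → (∀ v, ∀ w ∈ V, ⟪v - PV v, w⟫ = 0) →
        (∑ k ∈ Finset.univ.filter (fun k : Fin M => N ≤ (k : ℕ)), lam k) ≤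
          (1 / (M : ℝ)) * ∑ k, ‖y k - PV (y k)‖ ^ 2) ∧
    -- the POD space attains the minimum
    ((1 / (M : ℝ)) * ∑ k, ‖y k - P (y k)‖ ^ 2 =
      ∑ k ∈ Finset.univ.filter (fun k : Fin M => N ≤ (k : ℕ)), lam k) :=
  stmt_10_general M N hM y C hC lam e heig horth hsort hpos η hη S hS P hPmem hPorth
end
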